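/- Let a : ℝ → ℝ be continuous, 1-periodic, and strictly positive. Then the coefficient C₁₁ = ⟨a⁻¹·[[a·[[a⁻¹]]]]⟩ satisfies C₁₁ = −⟨a·[[a⁻¹]]²⟩ ≤ 0; moreover, if a is not constant then C₁₁ < 0. -/

import Mathlib

open MeasureTheory Matrix

/-- The mean of a function over one period: `⟨b⟩ = ∫₀¹ b(y) dy`. -/
noncomputable def pmean (b : ℝ → ℝ) : ℝ := ∫ y in (0:ℝ)..1, b y

/-- The fluctuating (mean-zero) part: `{b} = b − ⟨b⟩`. -/
noncomputable def pfluct (b : ℝ → ℝ) : ℝ → ℝ := fun y => b y - pmean b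

/-- The mean-zero primitive of the fluctuating part:
`[[b]](y) = ∫₀^y {b}(ξ) dξ − ∫₀¹ (∫₀^s {b}(ξ) dξ) ds`. -/
noncomputable def pbracket (b : ℝ → ℝ) : ℝ → ℝ :=
  fun y => (∫ ξ in (0:ℝ)..y, pfluct b ξ) - ∫ s in (0:ℝ)..1, (∫ ξ in (0:ℝ)..s, pfluct b ξ)

/-!
Over a period, `⟨b · [[c]]⟩ = -⟨[[b]] · c⟩`: integrate by parts, the boundary terms cancel because
`[[b]](1) = [[b]](0)`, and replacing `b` by `{b}` costs nothing since `⟨[[c]]⟩ = 0`. With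
`b = a⁻¹`, `c = a β`, `β = [[a⁻¹]]` this gives `C₁₁ = -⟨a β²⟩ ≤ 0`. If `a` is not constant,
neither is `a⁻¹ = ⟨a⁻¹⟩ + β'`, so `β ≢ 0`, and the continuous, `1`-periodic, nonnegative function
`a β²` is positive somewhere in `[0, 1)`, hence has positive mean.
-/

section MeanZeroPrimitive

variable {b c : ℝ → ℝ}

theorem Continuous.pfluct (hb : Continuous b) : Continuous (pfluct b) :=
  hb.sub continuous_const

theorem Function.Periodic.pfluct (hb : Function.Periodic b 1) :
    Function.Periodic (pfluct b) 1 := fun y => by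
  simp only [_root_.pfluct, hb y]

theorem pmean_pfluct (hb : Continuous b) : pmean (pfluct b) = 0 := by
  unfold pmean pfluct
  rw [intervalIntegral.integral_sub (hb.intervalIntegrable 0 1) intervalIntegrable_const]
  simp [pmean]

theorem pmean_pfluct_mul_of_pmean_eq_zero {g : ℝ → ℝ} (hb : Continuous b) (hg : Continuous g)
    (hg₀ : pmean g = 0) :
    pmean (fun y => pfluct b y * g y) = pmean (fun y => b y * g y) := by
  unfold pmean pfluct at *
  simp only [sub_mul]
  rw [intervalIntegral.integral_sub, intervalIntegral.integral_const_mul, hg₀, mul_zero, sub_zero]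
  exacts [(hb.mul hg).intervalIntegrable 0 1, (continuous_const.mul hg).intervalIntegrable 0 1]

theorem hasDerivAt_pbracket (hb : Continuous b) (y : ℝ) :
    HasDerivAt (pbracket b) (pfluct b y) y :=
  (hb.pfluct.integral_hasStrictDerivAt 0 y).hasDerivAt.sub_const _

theorem Continuous.pbracket (hb : Continuous b) : Continuous (pbracket b) :=
  continuous_iff_continuousAt.mpr fun y => (hasDerivAt_pbracket hb y).continuousAt

theorem pmean_pbracket (hb : Continuous b) : pmean (pbracket b) = 0 := by
  have hprim : Continuous fun y => ∫ ξ in (0:ℝ)..y, pfluct b ξ :=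
    intervalIntegral.continuous_primitive (fun _ _ => hb.pfluct.intervalIntegrable _ _) 0
  unfold pmean pbracket
  rw [intervalIntegral.integral_sub (hprim.intervalIntegrable 0 1) intervalIntegrable_const]
  simp

theorem pbracket_one (hb : Continuous b) : pbracket b 1 = pbracket b 0 := by
  have := pmean_pfluct hb
  unfold pbracket pmean at *
  simp [this]

theorem Function.Periodic.pbracket (hper : Function.Periodic b 1) (hb : Continuous b) :
    Function.Periodic (pbracket b) 1 := fun y => by
  have hint : ∀ s t, IntervalIntegrable (_root_.pfluct b) volume s t :=
    fun _ _ => hb.pfluct.intervalIntegrable _ _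
  have hperiod : ∫ ξ in y..y + 1, _root_.pfluct b ξ = 0 := by
    rw [hper.pfluct.intervalIntegral_add_eq y 0, zero_add]
    exact pmean_pfluct hb
  unfold _root_.pbracket
  rw [← intervalIntegral.integral_add_adjacent_intervals (hint 0 y) (hint y (y + 1)), hperiod,
    add_zero]

theorem pmean_pfluct_mul_pbracket (hb : Continuous b) (hc : Continuous c) :
    pmean (fun y => pfluct b y * pbracket c y) = -pmean (fun y => pbracket b y * pfluct c y) := by
  have ibp := intervalIntegral.integral_mul_deriv_eq_deriv_mul
    (fun y _ => hasDerivAt_pbracket hb y) (fun y _ => hasDerivAt_pbracket hc y)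
    (hb.pfluct.intervalIntegrable 0 1) (hc.pfluct.intervalIntegrable 0 1)
  rw [pbracket_one hb, pbracket_one hc, sub_self, zero_sub] at ibp
  simp only [pmean, ibp, neg_neg]

theorem pmean_mul_pbracket (hb : Continuous b) (hc : Continuous c) :
    pmean (fun y => b y * pbracket c y) = -pmean (fun y => pbracket b y * c y) := by
  calc pmean (fun y => b y * pbracket c y)
      = pmean (fun y => pfluct b y * pbracket c y) :=
        (pmean_pfluct_mul_of_pmean_eq_zero hb hc.pbracket (pmean_pbracket hc)).symm
    _ = -pmean (fun y => pbracket b y * pfluct c y) := pmean_pfluct_mul_pbracket hb hc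
    _ = -pmean (fun y => pbracket b y * c y) := by
        simp only [mul_comm (pbracket b _)]
        rw [pmean_pfluct_mul_of_pmean_eq_zero hc hb.pbracket (pmean_pbracket hb)]

theorem eq_pmean_of_pbracket_eq_zero (hb : Continuous b) (h : ∀ y, pbracket b y = 0) (y : ℝ) :
    b y = pmean b := by
  have h' : HasDerivAt (pbracket b) 0 y := by
    rw [show pbracket b = fun _ => 0 from funext h]
    exact hasDerivAt_const y 0
  exact sub_eq_zero.mp ((hasDerivAt_pbracket hb y).unique h')

end MeanZeroPrimitive

theorem pmean_pos_of_periodic {g : ℝ → ℝ} (hg : Continuous g) (hper : Function.Periodic g 1)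
    (hnonneg : ∀ y, 0 ≤ g y) {x : ℝ} (hx : 0 < g x) : 0 < pmean g := by
  obtain ⟨c, hc, hxc⟩ := hper.exists_mem_Ico₀ one_pos x
  exact intervalIntegral.integral_pos one_pos hg.continuousOn (fun y _ => hnonneg y)
    ⟨c, Set.Ico_subset_Icc_self hc, hxc ▸ hx⟩

/-- For `a` continuous, 1-periodic and strictly positive, the coefficient
`C₁₁ = ⟨a⁻¹·[[a·[[a⁻¹]]]]⟩` satisfies `C₁₁ = −⟨a·[[a⁻¹]]²⟩ ≤ 0`, with strict inequality
if `a` is not constant. -/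
theorem statement12 (a : ℝ → ℝ) (ha : Continuous a) (hper : Function.Periodic a 1)
    (hpos : ∀ y, 0 < a y)
    (C₁₁ : ℝ)
    (hC11 : C₁₁ = pmean (fun y => (a y)⁻¹
        * pbracket (fun z => a z * pbracket (fun w => (a w)⁻¹) z) y)) :
    C₁₁ = - pmean (fun y => a y * (pbracket (fun w => (a w)⁻¹) y)^2) ∧
    C₁₁ ≤ 0 ∧
    ((∃ x y, a x ≠ a y) → C₁₁ < 0) := by
  set β := pbracket fun w => (a w)⁻¹
  have hinv : Continuous fun w => (a w)⁻¹ := ha.inv₀ fun y => (hpos y).ne'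
  have hC : C₁₁ = -pmean (fun y => a y * β y ^ 2) := by
    rw [hC11, pmean_mul_pbracket (c := fun z => a z * β z) hinv (ha.mul hinv.pbracket)]
    congr 2
    funext y
    ring
  have hnonneg : ∀ y, 0 ≤ a y * β y ^ 2 := fun y => mul_nonneg (hpos y).le (sq_nonneg _)
  refine ⟨hC, hC ▸ neg_nonpos.mpr
    (intervalIntegral.integral_nonneg zero_le_one fun y _ => hnonneg y), ?_⟩
  rintro ⟨x, y, hxy⟩
  obtain ⟨z, hz⟩ : ∃ z, β z ≠ 0 := by
    by_contra! hβ
    have hconst := eq_pmean_of_pbracket_eq_zero hinv hβ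
    exact hxy (by rw [← inv_inv (a x), ← inv_inv (a y), hconst x, hconst y])
  have hβper : Function.Periodic β 1 := (hper.comp Inv.inv).pbracket hinv
  rw [hC, neg_lt_zero]
  exact pmean_pos_of_periodic (ha.mul (hinv.pbracket.pow 2)) (hper.mul (hβper.comp (· ^ 2)))
    hnonneg (mul_pos (hpos z) (sq_pos_of_ne_zero hz))
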